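/- Let G be a finitely generated residually finite group and φ an automorphism with R(φ) < ∞. Then for all g, s ∈ G the twisted stabilizer {k ∈ G : k·g·φ(k)⁻¹ = s·g·φ(s)⁻¹} is finite. -/

import Mathlib

/-- A group is residually finite if every nontrivial element survives in some
finite quotient (equivalently, avoids some finite-index normal subgroup). -/
def IsResiduallyFinite (G : Type*) [Group G] : Prop :=
  ∀ g : G, g ≠ 1 → ∃ H : Subgroup G, H.Normal ∧ H.FiniteIndex ∧ g ∉ H

/-- The setoid of `φ`-twisted conjugacy: `g ~ h` iff `h = x * g * φ(x)⁻¹` for some `x`. -/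
def twistedConjSetoid {G : Type*} [Group G] (φ : G ≃* G) : Setoid G where
  r g h := ∃ x : G, h = x * g * (φ x)⁻¹
  iseqv := by
    refine ⟨fun g => ⟨1, by simp⟩, ?_, ?_⟩
    · rintro g h ⟨x, rfl⟩
      exact ⟨x⁻¹, by simp [mul_assoc]⟩
    · rintro a b c ⟨x, rfl⟩ ⟨y, rfl⟩
      exact ⟨y * x, by simp [map_mul, mul_assoc]⟩

/-!
Twisting `φ` by the inner automorphism of `g` gives `ψ = conj g ∘ φ`, which has as many twisted
classes as `φ`, and whose fixed subgroup, translated by `s`, is the twisted stabilizer in question.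
If `Fix ψ` were infinite, residual finiteness and finite generation would give a `ψ`-invariant
normal subgroup `K` of finite index separating arbitrarily many fixed points. In the finite group
`G ⧸ K` the twisted conjugation action of the induced endomorphism has at most `R(ψ)` orbits, so
the class equation writes `1` as a sum of at most `R(ψ)` unit fractions `1 / |Stab|`. Landau's
bound on such sums bounds the stabilizer of `1`, which contains the images of all the chosen fixed
points.
-/

/-- If `a / b` is a sum of at most `n` unit fractions, the largest one has denominator at most
`n * b`, and removing it leaves a fraction with denominator at most `n * b * b`. -/
def landauBound : ℕ → ℕ → ℕ
  | 0, _ => 0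
  | n + 1, b => max ((n + 1) * b) (landauBound n ((n + 1) * b * b))

theorem landauBound_mono :
    ∀ (n : ℕ) {b b' : ℕ}, b ≤ b' → landauBound n b ≤ landauBound n b'
  | 0, _, _, _ => le_rfl
  | n + 1, _, _, h => max_le_max (by gcongr) (landauBound_mono n (by gcongr))

section EgyptianFraction

variable {ι : Type*} {s : Finset ι} {f : ι → ℕ} {a b : ℕ}

theorem le_mul_of_div_eq_sum_one_div {m : ℕ} (hs : s.card ≤ m) (ha : 0 < a) (hb : 0 < b)
    (hf : ∀ i ∈ s, 0 < f i) (hsum : (a : ℚ) / b = ∑ i ∈ s, 1 / (f i : ℚ))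
    {j : ι} (hj : j ∈ s) (hmin : ∀ i ∈ s, f j ≤ f i) : f j ≤ m * b := by
  have hfj : (0 : ℚ) < f j := by exact_mod_cast hf j hj
  have hle : (a : ℚ) / b ≤ m / f j :=
    calc (a : ℚ) / b = ∑ i ∈ s, 1 / (f i : ℚ) := hsum
      _ ≤ ∑ _i ∈ s, 1 / (f j : ℚ) :=
        Finset.sum_le_sum fun i hi => one_div_le_one_div_of_le hfj (by exact_mod_cast hmin i hi)
      _ = s.card / f j := by simp [div_eq_mul_inv]
      _ ≤ m / f j := by gcongr
  rw [div_le_div_iff₀ (by exact_mod_cast hb) hfj] at hle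
  have : a * f j ≤ m * b := by exact_mod_cast hle
  nlinarith

variable [DecidableEq ι]

theorem sum_erase_one_div_eq (hsum : (a : ℚ) / b = ∑ i ∈ s, 1 / (f i : ℚ)) {j : ι}
    (hj : j ∈ s) (hb : 0 < b) (hfj : 0 < f j) (hlt : b < a * f j) :
    ((a * f j - b : ℕ) : ℚ) / (b * f j : ℕ) = ∑ i ∈ s.erase j, 1 / (f i : ℚ) := by
  rw [← Finset.add_sum_erase s _ hj] at hsum
  rw [eq_sub_of_add_eq' hsum.symm]
  push_cast [hlt.le]
  field_simp

theorem le_landauBound (n : ℕ) (hs : s.card ≤ n) (ha : 0 < a) (hb : 0 < b)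
    (hf : ∀ i ∈ s, 0 < f i) (hsum : (a : ℚ) / b = ∑ i ∈ s, 1 / (f i : ℚ)) {i : ι}
    (hi : i ∈ s) : f i ≤ landauBound n b := by
  induction n generalizing s a b with
  | zero => simp [Finset.card_eq_zero.1 (Nat.le_zero.1 hs)] at hi
  | succ n ih =>
    obtain ⟨j, hj, hmin⟩ := s.exists_min_image f ⟨i, hi⟩
    have hfj : f j ≤ (n + 1) * b := le_mul_of_div_eq_sum_one_div hs ha hb hf hsum hj hmin
    by_cases hij : i = j
    · exact hij ▸ hfj.trans (le_max_left _ _)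
    have hi' : i ∈ s.erase j := Finset.mem_erase.2 ⟨hij, hi⟩
    have hrest : 0 < ∑ k ∈ s.erase j, 1 / (f k : ℚ) :=
      Finset.sum_pos' (fun k _ => by positivity) ⟨i, hi', by have := hf i hi; positivity⟩
    have hlt : b < a * f j := by
      rw [← Finset.add_sum_erase s _ hj] at hsum
      have : (1 : ℚ) / f j < a / b := by linarith
      rw [div_lt_div_iff₀ (by exact_mod_cast hf j hj) (by exact_mod_cast hb)] at this
      exact_mod_cast (one_mul (b : ℚ)) ▸ this
    calc f i ≤ landauBound n (b * f j) :=
          ih (by rw [Finset.card_erase_of_mem hj]; omega) (by omega) (Nat.mul_pos hb (hf j hj))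
            (fun k hk => hf k (Finset.mem_of_mem_erase hk))
            (sum_erase_one_div_eq hsum hj hb (hf j hj) hlt) hi'
      _ ≤ landauBound n ((n + 1) * b * b) := landauBound_mono n (by nlinarith)
      _ ≤ landauBound (n + 1) b := le_max_right _ _

end EgyptianFraction

namespace MulAction

variable {α β : Type*} [Group α] [MulAction α β]

theorem sum_card_orbit [Fintype (orbitRel.Quotient α β)] [Finite β] :
    ∑ ω : orbitRel.Quotient α β, Nat.card ω.orbit = Nat.card β := by
  rw [Nat.card_congr (selfEquivSigmaOrbits' α β), Nat.card_sigma]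

theorem card_orbit_mul_card_stabilizer (b : β) :
    Nat.card (orbit α b) * Nat.card (stabilizer α b) = Nat.card α := by
  rw [← Nat.card_prod, Nat.card_congr (orbitProdStabilizerEquivGroup α b)]

theorem card_stabilizer_le_landauBound [Finite α] [Finite β] (hcard : Nat.card β = Nat.card α)
    {n : ℕ} (hn : Nat.card (orbitRel.Quotient α β) ≤ n) (b : β) :
    Nat.card (stabilizer α b) ≤ landauBound n 1 := by
  classical
  have := Fintype.ofFinite (orbitRel.Quotient α β)
  -- `f ω` is the common order of the stabilizers of the points of `ω`
  set f : orbitRel.Quotient α β → ℕ := fun ω => Nat.card α / Nat.card ω.orbit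
  have hf : ∀ c : β, f (Quotient.mk'' c) = Nat.card (stabilizer α c) := fun c => by
    simp only [f, orbitRel.Quotient.orbit_mk]
    have : Nonempty (orbit α c) := (nonempty_orbit c).to_subtype
    conv_lhs => rw [← card_orbit_mul_card_stabilizer c]
    exact Nat.mul_div_cancel_left _ Nat.card_pos
  have hf_pos : ∀ ω, 0 < f ω := fun ω => by
    induction ω using Quotient.inductionOn' with | h c => exact (hf c).symm ▸ Nat.card_pos
  have hf_mul : ∀ ω : orbitRel.Quotient α β, (Nat.card ω.orbit : ℚ) * f ω = Nat.card α :=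
    fun ω => by
      induction ω using Quotient.inductionOn' with | h c =>
      rw [hf c, orbitRel.Quotient.orbit_mk]
      exact_mod_cast card_orbit_mul_card_stabilizer c
  have hsum : ((1 : ℕ) : ℚ) / (1 : ℕ) = ∑ ω, 1 / (f ω : ℚ) :=
    calc ((1 : ℕ) : ℚ) / (1 : ℕ) = (Nat.card β : ℚ) / Nat.card α := by
          rw [hcard, Nat.cast_one, div_one, div_self (Nat.cast_ne_zero.2 Nat.card_pos.ne')]
      _ = ∑ ω, (Nat.card ω.orbit : ℚ) / Nat.card α := by
          rw [← sum_card_orbit (α := α), Nat.cast_sum, Finset.sum_div]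
      _ = ∑ ω, 1 / (f ω : ℚ) := Finset.sum_congr rfl fun ω _ => by
          have : Nonempty ω.orbit := ω.nonempty_orbit.to_subtype
          rw [← hf_mul ω, div_mul_cancel_left₀ (Nat.cast_ne_zero.2 Nat.card_pos.ne'), one_div]
  rw [← hf b]
  exact le_landauBound n (by simpa [Nat.card_eq_fintype_card] using hn) one_pos one_pos
    (fun ω _ => hf_pos ω) hsum (Finset.mem_univ _)

end MulAction

-- `θ` is a parameter of the type only so that the action below can depend on it.
def TwistedConj {Q : Type*} [Group Q] (_θ : Q →* Q) : Type _ := Q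

namespace TwistedConj

variable {Q : Type*} [Group Q] (θ : Q →* Q)

def of : Q ≃ TwistedConj θ := Equiv.refl Q

instance : MulAction Q (TwistedConj θ) where
  smul x q := of θ (x * (of θ).symm q * (θ x)⁻¹)
  one_smul q := show of θ (1 * (of θ).symm q * (θ 1)⁻¹) = q by simp
  mul_smul x y q := show of θ (x * y * (of θ).symm q * (θ (x * y))⁻¹) =
      of θ (x * (of θ).symm (of θ (y * (of θ).symm q * (θ y)⁻¹)) * (θ x)⁻¹) by
    simp [mul_assoc]

theorem smul_of (x q : Q) : x • of θ q = of θ (x * q * (θ x)⁻¹) := rfl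

theorem mem_stabilizer_of_one {x : Q} : x ∈ MulAction.stabilizer Q (of θ 1) ↔ θ x = x := by
  rw [MulAction.mem_stabilizer_iff, smul_of, (of θ).apply_eq_iff_eq, mul_one, mul_inv_eq_one,
    eq_comm]

instance [Finite Q] : Finite (TwistedConj θ) := inferInstanceAs (Finite Q)

theorem card_eq : Nat.card (TwistedConj θ) = Nat.card Q := Nat.card_congr (of θ).symm

end TwistedConj

theorem finite_monoidHom_of_fg (G M : Type*) [Group G] [Group.FG G] [Monoid M] [Finite M] :
    Finite (G →* M) := by
  obtain ⟨S, hS, hSfin⟩ := Group.fg_iff.1 ‹Group.FG G›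
  have := hSfin.to_subtype
  exact Finite.of_injective (fun f : G →* M => fun x : S => f x)
    fun f g h => MonoidHom.eq_of_eqOn_dense hS fun x hx => congrFun h ⟨x, hx⟩

theorem IsResiduallyFinite.residuallyFinite {G : Type*} [Group G] (h : IsResiduallyFinite G) :
    Group.ResiduallyFinite G :=
  Group.residuallyFinite_iff_exists_finiteIndex.2 fun g hg =>
    (h g hg).imp fun _ hH => ⟨hH.2.1, hH.2.2⟩

namespace Group

variable {G : Type*} [Group G]

theorem exists_finiteIndexNormalSubgroup_injOn [ResiduallyFinite G] {F : Set G} (hF : F.Finite) :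
    ∃ N : FiniteIndexNormalSubgroup G, F.InjOn (QuotientGroup.mk : G → G ⧸ N.toSubgroup) := by
  have hsep : ∀ p : G × G, ∃ N : FiniteIndexNormalSubgroup G,
      p.1 ≠ p.2 → (p.1 : G ⧸ N.toSubgroup) ≠ p.2 := fun p => by
    by_cases h : p.1 = p.2
    · exact ⟨.ofSubgroup ⊤, fun h' => (h' h).elim⟩
    · exact (exists_finiteIndexNormalSubgroup_of_residuallyFinite _ _ h).imp fun _ hN _ => hN
  choose N hN using hsep
  have := (hF.prod hF).to_subtype
  have : (⨅ p : F ×ˢ F, (N p).toSubgroup).Normal :=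
    Subgroup.normal_iInf_normal fun _ => inferInstance
  have : (⨅ p : F ×ˢ F, (N p).toSubgroup).FiniteIndex :=
    Subgroup.finiteIndex_iInf fun _ => inferInstance
  refine ⟨.ofSubgroup (⨅ p : F ×ˢ F, (N p).toSubgroup), fun a ha b hb hab => ?_⟩
  by_contra hne
  refine hN (a, b) hne (QuotientGroup.eq.2 ?_)
  exact Subgroup.mem_iInf.1 (QuotientGroup.eq.1 hab) ⟨(a, b), ha, hb⟩

/-- Take the intersection of the kernels of the finitely many homomorphisms `G →* G ⧸ N`. -/
theorem exists_finiteIndexNormalSubgroup_le_comap [FG G] (ψ : G →* G) (N : Subgroup G)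
    [N.Normal] [N.FiniteIndex] :
    ∃ K : FiniteIndexNormalSubgroup G,
      K.toSubgroup ≤ N ∧ K.toSubgroup ≤ K.toSubgroup.comap ψ := by
  have := finite_monoidHom_of_fg G (G ⧸ N)
  have : (⨅ f : G →* G ⧸ N, f.ker).Normal :=
    Subgroup.normal_iInf_normal fun _ => inferInstance
  have : (⨅ f : G →* G ⧸ N, f.ker).FiniteIndex :=
    Subgroup.finiteIndex_iInf fun _ => inferInstance
  refine ⟨.ofSubgroup (⨅ f : G →* G ⧸ N, f.ker), ?_, fun x hx => ?_⟩
  · exact (iInf_le _ (QuotientGroup.mk' N)).trans (QuotientGroup.ker_mk' N).le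
  · exact Subgroup.mem_iInf.2 fun (f : G →* G ⧸ N) => Subgroup.mem_iInf.1 hx (f.comp ψ)

theorem exists_finiteIndexNormalSubgroup_le_comap_injOn [FG G] [ResiduallyFinite G]
    (ψ : G →* G) {F : Set G} (hF : F.Finite) :
    ∃ K : FiniteIndexNormalSubgroup G, K.toSubgroup ≤ K.toSubgroup.comap ψ ∧
      F.InjOn (QuotientGroup.mk : G → G ⧸ K.toSubgroup) := by
  obtain ⟨N, hN⟩ := exists_finiteIndexNormalSubgroup_injOn hF
  obtain ⟨K, hKN, hK⟩ := exists_finiteIndexNormalSubgroup_le_comap ψ N.toSubgroup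
  exact ⟨K, hK, fun a ha b hb hab =>
    hN ha hb (QuotientGroup.eq.2 (hKN (QuotientGroup.eq.1 hab)))⟩

end Group

section TwistedConjugacyClasses

variable {G : Type*} [Group G]

open MulAction TwistedConj

theorem card_orbitRel_quotient_twistedConj_le {Q : Type*} [Group Q] {ψ : G ≃* G} {θ : Q →* Q}
    {π : G →* Q} [Finite (Quotient (twistedConjSetoid ψ))] (hπ : Function.Surjective π)
    (hθ : ∀ x, θ (π x) = π (ψ x)) :
    Nat.card (orbitRel.Quotient Q (TwistedConj θ)) ≤
      Nat.card (Quotient (twistedConjSetoid ψ)) := by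
  refine Nat.card_le_card_of_surjective
    (Quotient.lift (fun h => Quotient.mk'' (of θ (π h))) ?_) ?_
  · rintro h _ ⟨x, rfl⟩
    refine (Quotient.sound' (mem_orbit_iff.2 ⟨π x, ?_⟩)).symm
    rw [smul_of, hθ, map_mul π, map_mul π, map_inv π]
  · rintro ⟨q⟩
    obtain ⟨h, rfl⟩ := hπ q
    exact ⟨⟦h⟧, rfl⟩

theorem finite_fixedPoints_of_finite_twistedConj [Group.FG G] [Group.ResiduallyFinite G]
    (ψ : G ≃* G) [Finite (Quotient (twistedConjSetoid ψ))] : {x : G | ψ x = x}.Finite := by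
  by_contra hinf
  set n := Nat.card (Quotient (twistedConjSetoid ψ))
  obtain ⟨F, hF, hFfin, hFcard⟩ :=
    Set.Infinite.exists_subset_ncard_eq hinf (landauBound n 1 + 1)
  obtain ⟨K, hKψ, hK⟩ :=
    Group.exists_finiteIndexNormalSubgroup_le_comap_injOn (ψ : G →* G) hFfin
  set θ := QuotientGroup.map K.toSubgroup K.toSubgroup (ψ : G →* G) hKψ
  have hlow : F.ncard ≤ Nat.card (stabilizer (G ⧸ K.toSubgroup) (of θ 1)) := by
    rw [← Nat.card_coe_set_eq]
    refine Set.ncard_le_ncard_of_injOn _ (fun x hx => ?_) hK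
    exact (mem_stabilizer_of_one θ).2 (congrArg _ (hF hx))
  have hup : _ ≤ landauBound n 1 := card_stabilizer_le_landauBound (card_eq θ)
    (card_orbitRel_quotient_twistedConj_le (QuotientGroup.mk'_surjective K.toSubgroup)
      fun _ => rfl) (of θ 1)
  omega

def twistedConjQuotientTransConjEquiv (φ : G ≃* G) (g : G) :
    Quotient (twistedConjSetoid (φ.trans (MulAut.conj g))) ≃ Quotient (twistedConjSetoid φ) :=
  Quotient.congr (Equiv.mulRight g) fun a b => exists_congr fun x => by
    rw [← mul_left_inj g]
    simp [MulAut.conj_apply, mul_assoc]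

theorem trans_conj_apply_inv_mul_eq_iff (φ : G ≃* G) (g s k : G) :
    (φ.trans (MulAut.conj g)) (s⁻¹ * k) = s⁻¹ * k ↔
      k * g * (φ k)⁻¹ = s * g * (φ s)⁻¹ := by
  simp only [MulEquiv.trans_apply, MulAut.conj_apply, map_mul, map_inv]
  -- written as `_ = 1`, the left side is a conjugate of the inverse of the right side
  rw [← mul_inv_eq_one, ← mul_inv_eq_one (a := k * g * _), ← conj_eq_one_iff (a := s),
    ← inv_eq_one (a := k * g * _ * _)]
  convert Iff.rfl using 2
  group

end TwistedConjugacyClasses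

/-- If `G` is finitely generated residually finite and `R(φ) < ∞`, then all
twisted stabilizers `{k : k·g·φ(k)⁻¹ = s·g·φ(s)⁻¹}` are finite. -/
theorem stmt_15 {G : Type*} [Group G] [Group.FG G]
    (hrf : IsResiduallyFinite G) (φ : G ≃* G)
    (hR : Finite (Quotient (twistedConjSetoid φ))) (g s : G) :
    ({k : G | k * g * (φ k)⁻¹ = s * g * (φ s)⁻¹} : Set G).Finite := by
  have := hrf.residuallyFinite
  set ψ := φ.trans (MulAut.conj g)
  have : Finite (Quotient (twistedConjSetoid ψ)) :=
    Finite.of_equiv _ (twistedConjQuotientTransConjEquiv φ g).symm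
  have hstab :
      {k : G | k * g * (φ k)⁻¹ = s * g * (φ s)⁻¹} = (s⁻¹ * ·) ⁻¹' {x | ψ x = x} :=
    Set.ext fun k => (trans_conj_apply_inv_mul_eq_iff φ g s k).symm
  rw [hstab]
  exact (finite_fixedPoints_of_finite_twistedConj ψ).preimage (mul_right_injective _).injOn
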